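/- arXiv:1010.0011 — 4 statements merged into one kernel-verified Lean document; each statement's English description precedes it below -/
import Mathlib

section
/- Let A be a K × N complex matrix whose columns all have unit ℓ2-norm, and let μ = max_{l ≠ m} |a_l^H · a_m| be its coherence, assumed positive. If s is a positive integer with s < (1/2)(1/μ + 1), then any two vectors x_1, x_2 ∈ ℂ^N each having at most s nonzero entries and satisfying A x_1 = A x_2 must be equal; equivalently, every set of 2s columns of A is linearly independent. -/
/-!
On the support `T` of `x₁ - x₂` (at most `2s` indices), the Gram matrix of the columns of `A`
has unit diagonal and off-diagonal entries of modulus at most `μ`, so the off-diagonal part of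
each of its rows has mass at most `μ (|T| - 1) ≤ μ (2s - 1) < 1`. By Gershgorin this Gram
submatrix is nonsingular, hence the columns indexed by `T` are linearly independent, and
`A (x₁ - x₂) = 0` forces `x₁ = x₂`.
-/

open Complex Finset

namespace Matrix

variable {𝕜 m n : Type*} [RCLike 𝕜] [Fintype m] [Fintype n] [DecidableEq n]

theorem det_conjTranspose_mul_self_ne_zero_of_coherence (A : Matrix m n 𝕜) {μ : ℝ}
    (hdiag : ∀ j, (Aᴴ * A) j j = 1) (hoff : ∀ i j, i ≠ j → ‖(Aᴴ * A) i j‖ ≤ μ)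
    (hμ : μ * ((Fintype.card n : ℝ) - 1) < 1) :
    (Aᴴ * A).det ≠ 0 := by
  refine det_ne_zero_of_sum_row_lt_diag fun i => ?_
  calc ∑ j ∈ univ.erase i, ‖(Aᴴ * A) i j‖
      ≤ ∑ _j ∈ univ.erase i, μ := sum_le_sum fun j hj => hoff i j (ne_of_mem_erase hj).symm
    _ = μ * ((Fintype.card n : ℝ) - 1) := by
      rw [sum_const, card_erase_of_mem (mem_univ i), card_univ, nsmul_eq_mul, mul_comm,
        Nat.cast_sub (Fintype.card_pos_iff.mpr ⟨i⟩), Nat.cast_one]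
    _ < ‖(Aᴴ * A) i i‖ := by rwa [hdiag, norm_one]

theorem eq_zero_of_mulVec_eq_zero_of_coherence [DecidableEq 𝕜] (A : Matrix m n 𝕜) {μ : ℝ}
    (hdiag : ∀ j, (Aᴴ * A) j j = 1) (hoff : ∀ i j, i ≠ j → ‖(Aᴴ * A) i j‖ ≤ μ)
    {z : n → 𝕜} (hμ : μ * ((#{j | z j ≠ 0} : ℝ) - 1) < 1) (hz : A *ᵥ z = 0) :
    z = 0 := by
  let B : Matrix m {j // z j ≠ 0} 𝕜 := A.submatrix id Subtype.val
  have hgram : Bᴴ * B = (Aᴴ * A).submatrix Subtype.val Subtype.val := by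
    rw [conjTranspose_submatrix]
    exact submatrix_mul _ _ _ _ _ Function.bijective_id
  have hBz : B *ᵥ (fun j => z j) = A *ᵥ z := by
    ext k
    simp only [B, mulVec, dotProduct, submatrix_apply, id]
    rw [← sum_subtype _ (fun j => mem_filter_univ j) (fun j => A k j * z j)]
    exact sum_filter_of_ne fun j _ hj => right_ne_zero_of_mul hj
  have hdet : (Bᴴ * B).det ≠ 0 := by
    refine det_conjTranspose_mul_self_ne_zero_of_coherence B (μ := μ)
      (fun j => ?_) (fun i j hij => ?_) ?_
    · rw [hgram, submatrix_apply, hdiag]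
    · rw [hgram, submatrix_apply]; exact hoff _ _ (Subtype.coe_ne_coe.mpr hij)
    · rwa [Fintype.card_subtype]
  have hzT : (fun j : {j // z j ≠ 0} => z j) = 0 :=
    eq_zero_of_mulVec_eq_zero hdet (by rw [← mulVec_mulVec, hBz, hz, mulVec_zero])
  funext j
  by_contra hj
  exact hj (congrFun hzT ⟨j, hj⟩)

end Matrix

theorem Finset.card_filter_sub_ne_zero_le {ι G : Type*} [Fintype ι] [AddGroup G] [DecidableEq G]
    (x y : ι → G) : #{i | (x - y) i ≠ 0} ≤ #{i | x i ≠ 0} + #{i | y i ≠ 0} := by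
  classical
  refine (card_le_card fun i => ?_).trans (card_union_le _ _)
  simp only [mem_filter_univ, mem_union, Pi.sub_apply]
  contrapose!
  rintro ⟨hx, hy⟩
  rw [hx, hy, sub_zero]

open Matrix

theorem sparse_recovery_of_coherence_general (K N : ℕ) (A : Matrix (Fin K) (Fin N) ℂ)
    (hcol : ∀ n : Fin N, ∑ k : Fin K, ‖A k n‖ ^ 2 = 1)
    (μ : ℝ)
    (hμub : ∀ l m : Fin N, l ≠ m →
      ‖∑ k : Fin K, (starRingEnd ℂ) (A k l) * A k m‖ ≤ μ)
    (hμpos : 0 < μ)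
    (s : ℕ) (hsμ : (s : ℝ) < (1 / 2) * (1 / μ + 1))
    (x₁ x₂ : Fin N → ℂ)
    (hx₁ : (Finset.univ.filter fun n => x₁ n ≠ 0).card ≤ s)
    (hx₂ : (Finset.univ.filter fun n => x₂ n ≠ 0).card ≤ s)
    (hAx : A.mulVec x₁ = A.mulVec x₂) :
    x₁ = x₂ := by
  have hdiag : ∀ n, (Aᴴ * A) n n = 1 := fun n => by
    simp only [mul_apply, conjTranspose_apply, Complex.star_def, Complex.conj_mul']
    exact_mod_cast hcol n
  have hoff : ∀ l m, l ≠ m → ‖(Aᴴ * A) l m‖ ≤ μ := fun l m hlm => by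
    simpa only [mul_apply, conjTranspose_apply, Complex.star_def] using hμub l m hlm
  have hcard : (#{n | (x₁ - x₂) n ≠ 0} : ℝ) ≤ 2 * s := by
    exact_mod_cast (card_filter_sub_ne_zero_le x₁ x₂).trans (by omega)
  have hμs : μ * ((#{n | (x₁ - x₂) n ≠ 0} : ℝ) - 1) < 1 := by
    calc μ * ((#{n | (x₁ - x₂) n ≠ 0} : ℝ) - 1) ≤ μ * (2 * s - 1) := by gcongr
      _ < 1 := (lt_div_iff₀' hμpos).mp (by linarith)
  exact sub_eq_zero.mp <| A.eq_zero_of_mulVec_eq_zero_of_coherence hdiag hoff hμs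
    (by rw [mulVec_sub, hAx, sub_self])

/-- (Tropp's sufficient condition) Let `A` be a `K × N` complex matrix with unit-norm columns and
coherence `μ = max_{l ≠ m} |a_l^H · a_m| > 0`. If `s` is a positive integer with
`s < (1/2)(1/μ + 1)`, then any two `s`-sparse vectors `x₁, x₂ ∈ ℂ^N` with `A x₁ = A x₂`
are equal. -/
theorem sparse_recovery_of_coherence (K N : ℕ) (A : Matrix (Fin K) (Fin N) ℂ)
    (hcol : ∀ n : Fin N, ∑ k : Fin K, ‖A k n‖ ^ 2 = 1)
    (μ : ℝ)
    (hμub : ∀ l m : Fin N, l ≠ m →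
      ‖∑ k : Fin K, (starRingEnd ℂ) (A k l) * A k m‖ ≤ μ)
    (hμmem : ∃ l m : Fin N, l ≠ m ∧
      ‖∑ k : Fin K, (starRingEnd ℂ) (A k l) * A k m‖ = μ)
    (hμpos : 0 < μ)
    (s : ℕ) (hs : 0 < s) (hsμ : (s : ℝ) < (1 / 2) * (1 / μ + 1))
    (x₁ x₂ : Fin N → ℂ)
    (hx₁ : (Finset.univ.filter fun n => x₁ n ≠ 0).card ≤ s)
    (hx₂ : (Finset.univ.filter fun n => x₂ n ≠ 0).card ≤ s)
    (hAx : A.mulVec x₁ = A.mulVec x₂) :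
    x₁ = x₂ :=
  sparse_recovery_of_coherence_general K N A hcol μ hμub hμpos s hsμ x₁ x₂ hx₁ hx₂ hAx
end

section
/- Fix b_2, b_3, …, b_h ∈ F_{p^m} and consider the K × K submatrix σ of the matrix A of Construction 1 consisting of the K columns whose associated tuples are (b_1, b_2, …, b_h) with b_1 ranging over F_{p^m}. Then σ is a unitary matrix; in particular its K columns form an orthonormal basis of ℂ^K, and any two distinct rows of σ are orthogonal. -/
/-!
Every entry of `σ` has the form `K^{-1/2} ψ(b₁ x_k + s_k)`, where `ψ = ω_p^{Tr(·)}` is a primitive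
additive character of `F`, the row points `x_k = bOf α k` run through all of `F`, and the shift
`s_k` does not depend on the column. Hence `(σᴴ σ)_{u u'} = K⁻¹ ∑_{x ∈ F} ψ(x (b_{u'} - b_u))`,
which is `1` or `0` according as `b_u = b_{u'}` by orthogonality of characters, and
`u ↦ bOf α u` is injective on `{0, …, K - 1}`.
-/

open Complex Finset

/-- The canonical additive character of a finite field `F` of characteristic `p`:
`χ(y) = exp(2πi · Tr(y) / p) = ω_p^{Tr(y)}`, where `Tr : F → F_p` is the field trace. -/
noncomputable def addChar (p : ℕ) {F : Type*} [Field F] [Fintype F] [Algebra (ZMod p) F]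
    (y : F) : ℂ :=
  Complex.exp (2 * Real.pi * Complex.I * ((Algebra.trace (ZMod p) F y).val : ℂ) / p)

/-- `b_i` associated to the digit `u_i`: `b = 0` if `u = 0`, and `b = α^(u-1)` if `u ≥ 1`. -/
noncomputable def bOf {F : Type*} [Field F] (α : F) (u : ℕ) : F :=
  if u = 0 then 0 else α ^ (u - 1)

noncomputable def traceAddChar (p : ℕ) [NeZero p] (F : Type*) [Field F] [Fintype F]
    [Algebra (ZMod p) F] : AddChar F ℂ :=
  ZMod.stdAddChar.compAddMonoidHom (Algebra.trace (ZMod p) F).toAddMonoidHom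

section traceAddChar

variable (p : ℕ) {F : Type*} [Field F] [Fintype F] [Algebra (ZMod p) F]

lemma traceAddChar_apply [NeZero p] (y : F) : traceAddChar p F y = addChar p y := by
  rw [traceAddChar, AddChar.compAddMonoidHom_apply, ZMod.stdAddChar_apply, ZMod.toCircle_apply]
  rfl

lemma isPrimitive_traceAddChar [Fact p.Prime] : (traceAddChar p F).IsPrimitive := by
  refine AddChar.IsPrimitive.of_ne_one (AddChar.ne_one_iff.2 ?_)
  obtain ⟨y, hy⟩ := Algebra.trace_surjective (ZMod p) F 1
  refine ⟨y, fun h => one_ne_zero (ZMod.injective_stdAddChar (N := p) ?_)⟩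
  simpa [traceAddChar, hy] using h

end traceAddChar

theorem mem_unitaryGroup_of_addChar {ι R : Type*} [Fintype ι] [DecidableEq ι] [CommRing R]
    [Fintype R] {ψ : AddChar R ℂ} (hψ : ψ.IsPrimitive) (x : ι ≃ R) {y : ι → R}
    (hy : Function.Injective y) (s : ι → R) (M : Matrix ι ι ℂ)
    (hM : ∀ k u, M k u = ((Real.sqrt (Fintype.card ι) : ℂ))⁻¹ * ψ (y u * x k + s k)) :
    M ∈ Matrix.unitaryGroup ι ℂ := by
  classical
  have hchar : 0 < ringChar R := Nat.pos_of_ne_zero (CharP.ringChar_ne_zero_of_finite R)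
  have hcard : Fintype.card R = Fintype.card ι := (Fintype.card_congr x).symm
  have hι : (Fintype.card ι : ℂ) ≠ 0 := by
    have : Nonempty ι := ⟨x.symm 0⟩
    exact_mod_cast Fintype.card_ne_zero
  have hnorm : star ((Real.sqrt (Fintype.card ι) : ℂ))⁻¹ * ((Real.sqrt (Fintype.card ι) : ℂ))⁻¹
      = (Fintype.card ι : ℂ)⁻¹ := by
    rw [star_inv₀, Complex.star_def, Complex.conj_ofReal, ← mul_inv, ← Complex.ofReal_mul,
      Real.mul_self_sqrt (Nat.cast_nonneg _)]
    push_cast; rfl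
  rw [Matrix.mem_unitaryGroup_iff']
  ext u u'
  have hcancel : ∀ k, star (ψ (y u * x k + s k)) * ψ (y u' * x k + s k) =
      ψ (x k * (y u' - y u)) := by
    intro k
    rw [Complex.star_def, AddChar.starComp_apply hchar, AddChar.inv_apply,
      ← AddChar.map_add_eq_mul]
    congr 1; ring
  calc (star M * M) u u'
      = (Fintype.card ι : ℂ)⁻¹ * ∑ k, ψ (x k * (y u' - y u)) := by
        simp only [Matrix.mul_apply, Matrix.star_apply, hM, star_mul', Finset.mul_sum]
        refine Finset.sum_congr rfl fun k _ => ?_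
        rw [← hcancel, ← hnorm]; ring
    _ = (Fintype.card ι : ℂ)⁻¹ * ∑ z, ψ (z * (y u' - y u)) := by
        rw [x.sum_comp (fun z => ψ (z * (y u' - y u)))]
    _ = (1 : Matrix ι ι ℂ) u u' := by
        rw [AddChar.sum_mulShift _ hψ, Matrix.one_apply, sub_eq_zero, hy.eq_iff, hcard]
        by_cases h : u = u'
        · simp [h, hι]
        · simp [h, Ne.symm h]

-- The powers of `α` repeat with period `q - 1`, except in the degenerate case `α = 0`, `q = 2`.
lemma bijective_bOf {F : Type*} [Field F] [Fintype F] {α : F}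
    (hα : ∀ x : F, x ≠ 0 → ∃ j : ℕ, α ^ j = x) :
    Function.Bijective (fun u : Fin (Fintype.card F) => bOf α u) := by
  refine (Fintype.bijective_iff_surjective_and_card _).2 ⟨fun z => ?_, Fintype.card_fin _⟩
  by_cases hz : z = 0
  · exact ⟨⟨0, Fintype.card_pos⟩, by simp [bOf, hz]⟩
  obtain ⟨j, rfl⟩ := hα z hz
  have hq : 1 < Fintype.card F := Fintype.one_lt_card
  have hj : j % (Fintype.card F - 1) < Fintype.card F - 1 := Nat.mod_lt j (by omega)
  refine ⟨⟨j % (Fintype.card F - 1) + 1, by omega⟩, ?_⟩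
  simp only [bOf, Nat.add_one_ne_zero, if_false, Nat.add_sub_cancel]
  by_cases hα0 : α = 0
  · obtain rfl : j = 0 := by
      by_contra hj
      exact hz (by simp [hα0, hj])
    simp
  · exact (pow_eq_pow_mod j (FiniteField.pow_card_sub_one_eq_one α hα0)).symm

theorem construction1_submatrix_unitary_general
    (p m h : ℕ) [Fact p.Prime]
    (K : ℕ) (hK : K = p ^ m)
    (F : Type*) [Field F] [Fintype F] [Algebra (ZMod p) F]
    (hcard : Fintype.card F = p ^ m)
    (α : F) (hα : ∀ x : F, x ≠ 0 → ∃ j : ℕ, α ^ j = x)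
    (r : ℕ → ℕ) (hr1 : r 1 = 1)
    (b : ℕ → F) (σ : Matrix (Fin K) (Fin K) ℂ)
    (hσ : ∀ (k u₁ : Fin K), σ k u₁ =
      if (k : ℕ) = 0 then ((Real.sqrt K : ℂ))⁻¹
      else ((Real.sqrt K : ℂ))⁻¹ * addChar p (bOf α (u₁ : ℕ) * α ^ (r 1 * ((k : ℕ) - 1)) +
        ∑ i ∈ Finset.Icc 2 h, b i * α ^ (r i * ((k : ℕ) - 1)))) :
    σ ∈ Matrix.unitaryGroup (Fin K) ℂ := by
  obtain rfl : K = Fintype.card F := hK.trans hcard.symm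
  have hbOf := bijective_bOf hα
  refine mem_unitaryGroup_of_addChar (isPrimitive_traceAddChar p) (Equiv.ofBijective _ hbOf)
    hbOf.injective (fun k => if (k : ℕ) = 0 then 0 else
      ∑ i ∈ Finset.Icc 2 h, b i * α ^ (r i * ((k : ℕ) - 1))) σ fun k u => ?_
  rw [hσ, hr1, Fintype.card_fin, ← traceAddChar_apply]
  by_cases hk : k = 0 <;> simp [hk, bOf]

/-- Fix `b₂, …, b_h ∈ F_{p^m}` and let `σ` be the `K × K` submatrix of the Construction 1
matrix consisting of the `K` columns whose tuples are `(b₁, b₂, …, b_h)` with `b₁` ranging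
over `F_{p^m}` (i.e. `b₁ = bOf α u₁` with `u₁` ranging over `{0, …, K−1}`). Then `σ` is
unitary: its columns form an orthonormal basis of `ℂ^K` and its rows are orthonormal. -/
theorem construction1_submatrix_unitary
    (p m h d : ℕ) [Fact p.Prime] (hodd : Odd p) (hm : 0 < m) (hh : 1 < h)
    (K N : ℕ) (hK : K = p ^ m) (hN : N = K ^ h)
    (F : Type*) [Field F] [Fintype F] [Algebra (ZMod p) F]
    (hcard : Fintype.card F = p ^ m)
    (α : F) (hα : ∀ x : F, x ≠ 0 → ∃ j : ℕ, α ^ j = x)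
    (r : ℕ → ℕ) (hd : h ≤ d) (hr1 : r 1 = 1) (hrh : r h = d)
    (hrmono : StrictMonoOn r (Set.Icc 1 h))
    (hrgcd : ∀ i ∈ Finset.Icc 1 h, Nat.gcd (r i) p = 1)
    (A : Matrix (Fin K) (Fin N) ℂ)
    (hA : ∀ (k : Fin K) (n : Fin N), A k n =
      if (k : ℕ) = 0 then ((Real.sqrt K : ℂ))⁻¹
      else ((Real.sqrt K : ℂ))⁻¹ * addChar p (∑ i ∈ Finset.Icc 1 h,
        bOf α ((n : ℕ) / K ^ (i - 1) % K) * α ^ (r i * ((k : ℕ) - 1))))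
    (b : ℕ → F) (σ : Matrix (Fin K) (Fin K) ℂ)
    (hσ : ∀ (k u₁ : Fin K), σ k u₁ =
      if (k : ℕ) = 0 then ((Real.sqrt K : ℂ))⁻¹
      else ((Real.sqrt K : ℂ))⁻¹ * addChar p (bOf α (u₁ : ℕ) * α ^ (r 1 * ((k : ℕ) - 1)) +
        ∑ i ∈ Finset.Icc 2 h, b i * α ^ (r i * ((k : ℕ) - 1)))) :
    σ ∈ Matrix.unitaryGroup (Fin K) ℂ :=
  construction1_submatrix_unitary_general p m h K hK F hcard α hα r hr1 b σ hσ
end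

section
/- The K × N matrix A of Construction 1 satisfies A A^H = (N/K) · I_K, where A^H is the conjugate transpose of A and I_K is the K × K identity matrix. In particular, A is a tight frame whose redundancy (squared spectral norm) is ρ = ‖A‖² = N/K, and any two distinct rows of A are orthogonal while each row has squared ℓ2-norm N/K. -/
/-!
Rescaled by `√K`, the entry in row `k` and column `n` is `ψ ⟪b(n), c_k⟫` for the additive
character `ψ = ω_p ^ Tr` of `F`, where `b(n) = (b_1, …, b_h) ∈ Fʰ` comes from the base-`K` digits
of `n` and `c_k = (α^{r_i (k-1)})ᵢ` (with `c_0 = 0`). Since `α` generates `Fˣ`, `n ↦ b(n)` is a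
bijection onto `Fʰ`, so the inner product of rows `k, k'` is the complete character sum
`∑_{b ∈ Fʰ} ψ ⟪b, c_k - c_k'⟫ = Kʰ · [c_k = c_k']`. As `r_1 = 1`, the first coordinate of `c_k`
already determines `k`, hence `A Aᴴ = (N/K) I`, and `‖A‖² = ‖A Aᴴ‖` by the C⋆-identity.
-/

open Complex Finset

open scoped Matrix

theorem AddChar.map_sum_eq_prod {A M ι : Type*} [AddCommMonoid A] [CommMonoid M]
    (ψ : AddChar A M) (s : Finset ι) (f : ι → A) : ψ (∑ i ∈ s, f i) = ∏ i ∈ s, ψ (f i) :=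
  map_prod ψ.toMonoidHom (fun i => Multiplicative.ofAdd (f i)) s

theorem AddChar.sum_pi_mulShift {R R' ι : Type*} [CommRing R] [Fintype R] [DecidableEq R]
    [CommRing R'] [IsDomain R'] [Fintype ι] [DecidableEq ι] {ψ : AddChar R R'}
    (hψ : ψ.IsPrimitive) (t : ι → R) :
    ∑ x : ι → R, ψ (∑ i, x i * t i) =
      if t = 0 then (Fintype.card R : R') ^ Fintype.card ι else 0 := by
  simp only [AddChar.map_sum_eq_prod]
  rw [← Fintype.prod_sum (fun i (y : R) => ψ (y * t i))]
  simp_rw [AddChar.sum_mulShift _ hψ, apply_ite (Nat.cast : ℕ → R'), Nat.cast_zero]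
  rw [Fintype.prod_ite_zero]
  simp [funext_iff]

theorem Finset.sum_Icc_one_eq_sum_fin {M : Type*} [AddCommMonoid M] (h : ℕ) (f : ℕ → M) :
    ∑ i ∈ Icc 1 h, f i = ∑ j : Fin h, f (j + 1) := by
  rw [Fin.sum_univ_eq_sum_range (fun j => f (j + 1)), range_eq_Ico, sum_Ico_add']
  rfl

section AddCharMatrix

variable {R ι m n : Type*} [CommRing R] [Fintype ι]

def addCharMatrix (ψ : AddChar R ℂ) (s : ℝ) (e : n ≃ (ι → R)) (c : m → ι → R) :
    Matrix m n ℂ :=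
  Matrix.of fun k l => (s : ℂ) * ψ (∑ i, e l i * c k i)

theorem addCharMatrix_mul_conjTranspose [Fintype R] [DecidableEq R] [DecidableEq ι] [Fintype n]
    [DecidableEq m] {ψ : AddChar R ℂ} (hψ : ψ.IsPrimitive) (s : ℝ) (e : n ≃ (ι → R)) {c : m → ι → R}
    (hc : Function.Injective c) :
    addCharMatrix ψ s e c * (addCharMatrix ψ s e c)ᴴ =
      ((s ^ 2 * Fintype.card R ^ Fintype.card ι : ℝ) : ℂ) • 1 := by
  ext k k'
  have hterm : ∀ l, (s : ℂ) * ψ (∑ i, e l i * c k i) * star ((s : ℂ) * ψ (∑ i, e l i * c k' i)) =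
      (s ^ 2 : ℝ) * ψ (∑ i, e l i * (c k - c k') i) := by
    intro l
    have hsplit : ∑ i, e l i * (c k - c k') i =
        ∑ i, e l i * c k i + -∑ i, e l i * c k' i := by
      simp only [← sub_eq_add_neg, ← sum_sub_distrib, Pi.sub_apply, mul_sub]
    rw [hsplit, AddChar.map_add_eq_mul, AddChar.map_neg_eq_conj, star_mul', Complex.star_def,
      Complex.conj_ofReal]
    push_cast
    ring
  simp only [addCharMatrix, Matrix.mul_apply, Matrix.conjTranspose_apply, Matrix.of_apply, hterm,
    ← mul_sum, Matrix.smul_apply, Matrix.one_apply, smul_eq_mul]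
  rw [e.sum_comp (fun x => ψ (∑ i, x i * (c k - c k') i)), AddChar.sum_pi_mulShift hψ]
  simp only [sub_eq_zero, hc.eq_iff]
  split_ifs <;> push_cast <;> ring

end AddCharMatrix

open scoped Matrix.Norms.L2Operator in
theorem Matrix.l2_opNorm_sq_of_mul_conjTranspose_eq_smul_one {m n 𝕜 : Type*} [RCLike 𝕜]
    [Fintype m] [Fintype n] [DecidableEq m] [DecidableEq n] [Nonempty m] {A : Matrix m n 𝕜}
    {c : ℝ} (hc : 0 ≤ c) (hA : A * Aᴴ = (c : 𝕜) • 1) : ‖A‖ ^ 2 = c := by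
  rw [sq, ← Matrix.l2_opNorm_conjTranspose A, ← Matrix.l2_opNorm_conjTranspose_mul_self,
    Matrix.conjTranspose_conjTranspose, hA, Matrix.smul_one_eq_diagonal,
    Matrix.l2_opNorm_diagonal]
  simp [hc]

section TraceChar

variable (p : ℕ) [Fact p.Prime] (F : Type*) [Field F] [Fintype F] [Algebra (ZMod p) F]

noncomputable def traceChar : AddChar F ℂ :=
  ZMod.stdAddChar.compAddMonoidHom (Algebra.trace (ZMod p) F).toAddMonoidHom

theorem addChar_eq_traceChar (y : F) : addChar p y = traceChar p F y := by
  simp [traceChar, addChar, ZMod.stdAddChar_apply, ZMod.toCircle_apply]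

theorem traceChar_isPrimitive : (traceChar p F).IsPrimitive := by
  refine AddChar.IsPrimitive.of_ne_one (AddChar.ne_one_iff.2 ?_)
  obtain ⟨a, ha⟩ := Algebra.trace_surjective (ZMod p) F 1
  refine ⟨a, ?_⟩
  rw [traceChar, AddChar.compAddMonoidHom_apply, LinearMap.toAddMonoidHom_coe, ha,
    ← (ZMod.stdAddChar (N := p)).map_zero_eq_one]
  exact ZMod.injective_stdAddChar.ne one_ne_zero

end TraceChar

section Construction1

variable {F : Type*} [Field F] [Fintype F] {α : F}

theorem bOf_bijective (hα : ∀ x : F, x ≠ 0 → ∃ j : ℕ, α ^ j = x) :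
    Function.Bijective (fun v : Fin (Fintype.card F) => bOf α v) := by
  refine (Fintype.bijective_iff_surjective_and_card _).2 ⟨fun x => ?_, Fintype.card_fin _⟩
  rcases eq_or_ne x 0 with rfl | hx
  · exact ⟨⟨0, Fintype.card_pos⟩, by simp [bOf]⟩
  obtain ⟨j, rfl⟩ := hα _ hx
  have hcard : 1 < Fintype.card F := Fintype.one_lt_card
  have hmod : α ^ (j % (Fintype.card F - 1)) = α ^ j := by
    rcases eq_or_ne α 0 with rfl | hα0
    · obtain rfl : j = 0 := by by_contra hj; exact hx (zero_pow hj)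
      simp
    · exact (pow_eq_pow_mod j (FiniteField.pow_card_sub_one_eq_one α hα0)).symm
  have hlt := j.mod_lt (by omega : 0 < Fintype.card F - 1)
  exact ⟨⟨j % (Fintype.card F - 1) + 1, by omega⟩, by simpa [bOf] using hmod⟩

/-- Column `n` ↦ `(b_1, …, b_h)`, with `b_{j+1}` read off the `j`-th base-`K` digit of `n`. -/
noncomputable def columnEquiv (hα : ∀ x : F, x ≠ 0 → ∃ j : ℕ, α ^ j = x) (h : ℕ) :
    Fin (Fintype.card F ^ h) ≃ (Fin h → F) :=
  finFunctionFinEquiv.symm.trans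
    (Equiv.arrowCongr (Equiv.refl _) (Equiv.ofBijective _ (bOf_bijective hα)))

theorem columnEquiv_apply (hα : ∀ x : F, x ≠ 0 → ∃ j : ℕ, α ^ j = x) {h : ℕ}
    (n : Fin (Fintype.card F ^ h)) (j : Fin h) :
    columnEquiv hα h n j = bOf α (n / Fintype.card F ^ (j : ℕ) % Fintype.card F) := by
  simp [columnEquiv, finFunctionFinEquiv_symm_apply_val]

def rowCoeffs (α : F) (r : ℕ → ℕ) (h k : ℕ) : Fin h → F :=
  fun j => if k = 0 then 0 else α ^ (r (j + 1) * (k - 1))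

theorem rowCoeffs_injective (hα : ∀ x : F, x ≠ 0 → ∃ j : ℕ, α ^ j = x) {r : ℕ → ℕ}
    (hr1 : r 1 = 1) {h : ℕ} (hh : 0 < h) :
    Function.Injective (fun k : Fin (Fintype.card F) => rowCoeffs α r h k) := by
  intro k k' hkk'
  apply (bOf_bijective hα).injective
  simpa [rowCoeffs, bOf, hr1] using congrFun hkk' ⟨0, hh⟩

theorem construction1_entry_eq (p : ℕ) [Fact p.Prime] [Algebra (ZMod p) F]
    (hα : ∀ x : F, x ≠ 0 → ∃ j : ℕ, α ^ j = x) (r : ℕ → ℕ) {h : ℕ}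
    (k : Fin (Fintype.card F)) (n : Fin (Fintype.card F ^ h)) :
    (if (k : ℕ) = 0 then ((Real.sqrt (Fintype.card F) : ℂ))⁻¹
      else ((Real.sqrt (Fintype.card F) : ℂ))⁻¹ * addChar p (∑ i ∈ Icc 1 h,
        bOf α ((n : ℕ) / Fintype.card F ^ (i - 1) % Fintype.card F) * α ^ (r i * ((k : ℕ) - 1)))) =
      addCharMatrix (traceChar p F) (Real.sqrt (Fintype.card F))⁻¹ (columnEquiv hα h)
        (fun k : Fin (Fintype.card F) => rowCoeffs α r h k) k n := by
  simp only [addCharMatrix, Matrix.of_apply, rowCoeffs, columnEquiv_apply, Complex.ofReal_inv]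
  split_ifs with hk
  · simp
  · rw [addChar_eq_traceChar, sum_Icc_one_eq_sum_fin]
    simp

end Construction1

open scoped Matrix.Norms.L2Operator in
theorem construction1_tight_frame_general
    (p m h : ℕ) [Fact p.Prime] (hh : 1 < h)
    (K N : ℕ) (hK : K = p ^ m) (hN : N = K ^ h)
    (F : Type*) [Field F] [Fintype F] [Algebra (ZMod p) F]
    (hcard : Fintype.card F = p ^ m)
    (α : F) (hα : ∀ x : F, x ≠ 0 → ∃ j : ℕ, α ^ j = x)
    (r : ℕ → ℕ) (hr1 : r 1 = 1)
    (A : Matrix (Fin K) (Fin N) ℂ)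
    (hA : ∀ (k : Fin K) (n : Fin N), A k n =
      if (k : ℕ) = 0 then ((Real.sqrt K : ℂ))⁻¹
      else ((Real.sqrt K : ℂ))⁻¹ * addChar p (∑ i ∈ Finset.Icc 1 h,
        bOf α ((n : ℕ) / K ^ (i - 1) % K) * α ^ (r i * ((k : ℕ) - 1))))
    :
    A * A.conjTranspose = ((N : ℂ) / (K : ℂ)) • (1 : Matrix (Fin K) (Fin K) ℂ) ∧
      ‖A‖ ^ 2 = (N : ℝ) / (K : ℝ) := by
  classical
  obtain rfl : K = Fintype.card F := hK.trans hcard.symm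
  subst hN
  have hA' : A = addCharMatrix (traceChar p F) (Real.sqrt (Fintype.card F))⁻¹ (columnEquiv hα h)
      (fun k : Fin (Fintype.card F) => rowCoeffs α r h k) := by
    ext k n
    rw [hA, construction1_entry_eq]
  have hAA : A * Aᴴ = (((Fintype.card F ^ h : ℕ) / Fintype.card F : ℝ) : ℂ) • 1 := by
    rw [hA', addCharMatrix_mul_conjTranspose (traceChar_isPrimitive p F) _ _
      (rowCoeffs_injective hα hr1 (by omega)), inv_pow, Real.sq_sqrt (Nat.cast_nonneg _),
      Fintype.card_fin]
    push_cast
    rw [inv_mul_eq_div]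
  have : Nonempty (Fin (Fintype.card F)) := ⟨⟨0, Fintype.card_pos⟩⟩
  exact ⟨by simpa using hAA,
    Matrix.l2_opNorm_sq_of_mul_conjTranspose_eq_smul_one (by positivity) hAA⟩

open scoped Matrix.Norms.L2Operator in
/-- The Construction 1 matrix satisfies `A Aᴴ = (N/K)·I_K`: it is a tight frame with
redundancy `ρ = ‖A‖² = N/K` (so distinct rows are orthogonal and each row has squared
ℓ₂-norm `N/K`). -/
theorem construction1_tight_frame
    (p m h d : ℕ) [Fact p.Prime] (hodd : Odd p) (hm : 0 < m) (hh : 1 < h)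
    (K N : ℕ) (hK : K = p ^ m) (hN : N = K ^ h)
    (F : Type*) [Field F] [Fintype F] [Algebra (ZMod p) F]
    (hcard : Fintype.card F = p ^ m)
    (α : F) (hα : ∀ x : F, x ≠ 0 → ∃ j : ℕ, α ^ j = x)
    (r : ℕ → ℕ) (hd : h ≤ d) (hr1 : r 1 = 1) (hrh : r h = d)
    (hrmono : StrictMonoOn r (Set.Icc 1 h))
    (hrgcd : ∀ i ∈ Finset.Icc 1 h, Nat.gcd (r i) p = 1)
    (A : Matrix (Fin K) (Fin N) ℂ)
    (hA : ∀ (k : Fin K) (n : Fin N), A k n =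
      if (k : ℕ) = 0 then ((Real.sqrt K : ℂ))⁻¹
      else ((Real.sqrt K : ℂ))⁻¹ * addChar p (∑ i ∈ Finset.Icc 1 h,
        bOf α ((n : ℕ) / K ^ (i - 1) % K) * α ^ (r i * ((k : ℕ) - 1))))
    :
    A * A.conjTranspose = ((N : ℂ) / (K : ℂ)) • (1 : Matrix (Fin K) (Fin K) ℂ) ∧
      ‖A‖ ^ 2 = (N : ℝ) / (K : ℝ) :=
  construction1_tight_frame_general p m h hh K N hK hN F hcard α hα r hr1 A hA
end

section
/- (Welch bound) Let K and N be positive integers with N ≥ 2, and let A be a K × N complex matrix whose columns a_0, …, a_{N−1} all have unit ℓ2-norm. Then the coherence μ = max_{0 ≤ l ≠ m ≤ N−1} |a_l^H · a_m| satisfies μ² ≥ (N − K)/(K(N − 1)). -/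
open Finset

/-!
Compare the Gram matrix `G = Aᴴ A` (`N × N`) with the frame operator `F = A Aᴴ` (`K × K`). Both
have trace `N` (the columns are unit vectors), and their squared Frobenius norms agree, both being
`tr (Aᴴ A Aᴴ A)`. Cauchy–Schwarz on the diagonal of `F` gives `N² ≤ K ‖F‖²_F`, while the entries of
`G` give `‖G‖²_F ≤ N (1 + (N - 1) μ²)`. Hence `N ≤ K (1 + (N - 1) μ²)`, which rearranges to the bound.
-/

namespace Matrix

variable {m n 𝕜 α : Type*} [Fintype m] [Fintype n]

theorem norm_trace_sq_le_card_mul_sum_norm_sq [SeminormedAddCommGroup α] (M : Matrix n n α) :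
    ‖M.trace‖ ^ 2 ≤ Fintype.card n * ∑ i, ∑ j, ‖M i j‖ ^ 2 :=
  calc ‖M.trace‖ ^ 2 ≤ (∑ i, ‖M i i‖) ^ 2 := by
        gcongr
        exact norm_sum_le _ _
    _ ≤ Fintype.card n * ∑ i, ‖M i i‖ ^ 2 := sq_sum_le_card_mul_sum_sq
    _ ≤ Fintype.card n * ∑ i, ∑ j, ‖M i j‖ ^ 2 := by
        gcongr with i
        exact single_le_sum (f := fun j => ‖M i j‖ ^ 2) (fun _ _ => by positivity) (mem_univ i)

theorem sum_norm_sq_le_of_norm_diag_le_of_norm_offDiag_le [SeminormedAddCommGroup α]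
    (M : Matrix n n α) {d μ : ℝ} (hdiag : ∀ i, ‖M i i‖ ≤ d) (hoff : ∀ i j, i ≠ j → ‖M i j‖ ≤ μ) :
    ∑ i, ∑ j, ‖M i j‖ ^ 2 ≤ Fintype.card n * (d ^ 2 + (Fintype.card n - 1) * μ ^ 2) := by
  classical
  have hrow (i : n) : ∑ j, ‖M i j‖ ^ 2 ≤ d ^ 2 + (Fintype.card n - 1) * μ ^ 2 := by
    rw [← add_sum_erase _ _ (mem_univ i)]
    have hcard : ((univ.erase i).card : ℝ) = Fintype.card n - 1 := by
      rw [card_erase_of_mem (mem_univ i), card_univ, Nat.cast_pred (Fintype.card_pos_iff.2 ⟨i⟩)]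
    gcongr
    · exact hdiag i
    · calc ∑ j ∈ univ.erase i, ‖M i j‖ ^ 2 ≤ ∑ j ∈ univ.erase i, μ ^ 2 := by
            gcongr with j hj
            exact hoff i j (ne_of_mem_erase hj).symm
        _ = (Fintype.card n - 1) * μ ^ 2 := by rw [sum_const, nsmul_eq_mul, hcard]
  calc ∑ i, ∑ j, ‖M i j‖ ^ 2 ≤ ∑ _i : n, (d ^ 2 + (Fintype.card n - 1) * μ ^ 2) :=
        sum_le_sum fun i _ => hrow i
    _ = _ := by rw [sum_const, nsmul_eq_mul, card_univ]

variable [RCLike 𝕜]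

theorem trace_mul_conjTranspose_eq_sum_norm_sq (M : Matrix m n 𝕜) :
    (M * Mᴴ).trace = ∑ i, ∑ j, ((‖M i j‖ ^ 2 : ℝ) : 𝕜) := by
  simp [trace, mul_apply, RCLike.mul_conj]

theorem sum_norm_sq_conjTranspose_mul_self_eq (A : Matrix m n 𝕜) :
    ∑ i, ∑ j, ‖(Aᴴ * A) i j‖ ^ 2 = ∑ i, ∑ j, ‖(A * Aᴴ) i j‖ ^ 2 := by
  apply RCLike.ofReal_injective (K := 𝕜)
  push_cast
  have h := trace_mul_conjTranspose_eq_sum_norm_sq (Aᴴ * A)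
  have h' := trace_mul_conjTranspose_eq_sum_norm_sq (A * Aᴴ)
  push_cast at h h'
  rw [← h, ← h', conjTranspose_mul, conjTranspose_mul, conjTranspose_conjTranspose,
    Matrix.mul_assoc, trace_mul_comm]
  simp only [Matrix.mul_assoc]

end Matrix

open Matrix

theorem welch_bound_general (K N : ℕ) (hN : 2 ≤ N)
    (A : Matrix (Fin K) (Fin N) ℂ)
    (hcol : ∀ n : Fin N, ∑ k : Fin K, ‖A k n‖ ^ 2 = 1)
    (μ : ℝ)
    (hμub : ∀ l m : Fin N, l ≠ m →
      ‖∑ k : Fin K, (starRingEnd ℂ) (A k l) * A k m‖ ≤ μ) :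
    ((N : ℝ) - K) / (K * ((N : ℝ) - 1)) ≤ μ ^ 2 := by
  have hgram_diag (l : Fin N) : (Aᴴ * A) l l = 1 := by
    simp only [mul_apply, conjTranspose_apply, RCLike.star_def, Complex.conj_mul']
    exact_mod_cast hcol l
  have htrace : (A * Aᴴ).trace = N := by
    rw [trace_mul_comm]
    simp [trace, hgram_diag]
  have hNr : (2 : ℝ) ≤ N := by exact_mod_cast hN
  have hframe : (N : ℝ) ^ 2 ≤ K * (N * (1 + (N - 1) * μ ^ 2)) := by
    calc (N : ℝ) ^ 2 = ‖(A * Aᴴ).trace‖ ^ 2 := by simp [htrace]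
      _ ≤ K * ∑ i, ∑ j, ‖(A * Aᴴ) i j‖ ^ 2 := by
          simpa using norm_trace_sq_le_card_mul_sum_norm_sq (A * Aᴴ)
      _ = K * ∑ i, ∑ j, ‖(Aᴴ * A) i j‖ ^ 2 := by rw [sum_norm_sq_conjTranspose_mul_self_eq]
      _ ≤ K * (N * (1 + (N - 1) * μ ^ 2)) := by
          gcongr
          simpa only [Fintype.card_fin, one_pow] using
            sum_norm_sq_le_of_norm_diag_le_of_norm_offDiag_le (Aᴴ * A) (d := 1)
              (fun l => by rw [hgram_diag, norm_one]) hμub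
  have hK : (0 : ℝ) < K := by
    by_contra! hK
    rw [le_antisymm hK K.cast_nonneg] at hframe
    nlinarith
  rw [div_le_iff₀ (by nlinarith)]
  nlinarith

/-- (Welch bound) Let `A` be a `K × N` complex matrix (`K, N ≥ 1`, `N ≥ 2`) whose columns all
have unit ℓ₂-norm, with coherence `μ = max_{l ≠ m} |a_l^H · a_m|`. Then
`μ² ≥ (N − K)/(K(N − 1))`. -/
theorem welch_bound (K N : ℕ) (hK : 0 < K) (hN : 2 ≤ N)
    (A : Matrix (Fin K) (Fin N) ℂ)
    (hcol : ∀ n : Fin N, ∑ k : Fin K, ‖A k n‖ ^ 2 = 1)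
    (μ : ℝ)
    (hμub : ∀ l m : Fin N, l ≠ m →
      ‖∑ k : Fin K, (starRingEnd ℂ) (A k l) * A k m‖ ≤ μ)
    (hμmem : ∃ l m : Fin N, l ≠ m ∧
      ‖∑ k : Fin K, (starRingEnd ℂ) (A k l) * A k m‖ = μ) :
    ((N : ℝ) - K) / (K * ((N : ℝ) - 1)) ≤ μ ^ 2 :=
  welch_bound_general K N hN A hcol μ hμub
end
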